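/- Suppose ρ := (1/λ)·ln(a/(a−λ)) satisfies ρ ≥ 2/a. Then problem (FP3) has a W^{1,1} local minimizer, every W^{1,1} local minimizer is a global minimizer, any two W^{1,1} local minimizers (x̄,ū) and (x̃,ũ) satisfy x̄ = x̃ on [t0,T] and ū = ũ a.e. on [t0,T], and the optimal trajectory x̄ is given by: (a) if T − t0 ≤ (1+x0)/a, then x̄(t) = x0 − a(t−t0) for all t ∈ [t0,T]; (b) if (1+x0)/a < T − t0 < (3−x0)/a, then, with t_ζ := (T + t0 − (1+x0)/a)/2, x̄(t) = x0 + a(t−t0) for t ∈ [t0, t_ζ] and x̄(t) = −1 − a(t−T) for t ∈ (t_ζ, T]; (c) if T − t0 ≥ (3−x0)/a, then x̄(t) = x0 + a(t−t0) for t ∈ [t0, t0+(1−x0)/a], x̄(t) = 1 for t ∈ (t0+(1−x0)/a, T−2/a], and x̄(t) = −1 − a(t−T) for t ∈ (T−2/a, T]. -/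

import Mathlib

open MeasureTheory Set

noncomputable section

/-- A feasible process for problem (FP3): `x` is the (absolutely continuous) state
trajectory, represented as the indefinite integral of its a.e. derivative `-a*u`,
`u` is a measurable control with values in `[-1,1]` a.e., the initial condition is
`x t0 = x0`, and the bilateral state constraint `-1 ≤ x t ≤ 1` holds on `[t0,T]`. -/
def FP3Feasible (a t0 T x0 : ℝ) (x u : ℝ → ℝ) : Prop :=
  AEStronglyMeasurable u (volume.restrict (Icc t0 T)) ∧
  (∀ᵐ t ∂(volume.restrict (Icc t0 T)), u t ∈ Icc (-1 : ℝ) 1) ∧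
  (∀ t ∈ Icc t0 T, x t = x0 + ∫ s in t0..t, -(a * u s)) ∧
  (∀ t ∈ Icc t0 T, x t ∈ Icc (-1 : ℝ) 1)

/-- The cost functional of (FP3) on the interval `[t1,t2]`. -/
def FP3Cost (lam t1 t2 : ℝ) (x u : ℝ → ℝ) : ℝ :=
  ∫ t in t1..t2, -(Real.exp (-(lam * t)) * (x t + u t))

/-- `(x,u)` is a `W^{1,1}` local minimizer of (FP3). -/
def FP3LocalMin (a lam t0 T x0 : ℝ) (x u : ℝ → ℝ) : Prop :=
  FP3Feasible a t0 T x0 x u ∧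
  ∃ δ > (0 : ℝ), ∀ y v, FP3Feasible a t0 T x0 y v →
    (∫ t in t0..T, |(-(a * v t)) - (-(a * u t))|) ≤ δ →
    FP3Cost lam t0 T x u ≤ FP3Cost lam t0 T y v

/-- `(x,u)` is a `W^{1,1}` global minimizer of (FP3). -/
def FP3GlobalMin (a lam t0 T x0 : ℝ) (x u : ℝ → ℝ) : Prop :=
  FP3Feasible a t0 T x0 x u ∧
  ∀ y v, FP3Feasible a t0 T x0 y v → FP3Cost lam t0 T x u ≤ FP3Cost lam t0 T y v

/-- The function `Δ(t1,t2) = e^{-λ t1} - 2 e^{-λ (t1+t2)/2} + e^{-λ t2}`. -/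
def FP3Delta (lam t1 t2 : ℝ) : ℝ :=
  Real.exp (-(lam * t1)) - 2 * Real.exp (-(lam * (t1 + t2) / 2)) + Real.exp (-(lam * t2))

/-- The characteristic constant `ρ = (1/λ) ln (a/(a-λ))` of (FP3). -/
def FP3rho (a lam : ℝ) : ℝ := (1 / lam) * Real.log (a / (a - lam))

/-!
Integrating `∫ e^{-λt} u` by parts (the state is absolutely continuous with `ẋ = -a u`) shows
that the cost depends on the trajectory alone:
`a J(x, u) = e^{-λT} x(T) - e^{-λt₀} x₀ - (a - λ) ∫ e^{-λt} x(t) dt`.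
Since `a > λ`, a good trajectory is high on average but ends low. The candidate
`x̄(t) = min (x₀ + a (t - t₀)) 1 (x̄(T) + a (T - t))`, with `x̄(T)` the lowest reachable endpoint,
rises at full speed, stays at the ceiling, and descends at full speed from a time `s` with
`T - s ≤ 2/a`. For a feasible `y`, the gap `d = x̄ - y` is `≥ 0` on `[t₀, s]`, `≥ d(T)` on
`[s, T]`, and `d(T) ≤ 0`, while `a (J(y) - J(x̄)) = (a - λ) ∫ e^{-λt} d - e^{-λT} d(T)`.
As `T - s ≤ 2/a ≤ ρ` gives `(a - λ) ∫_s^T e^{-λt} ≤ e^{-λT}`, this is nonnegative, and it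
vanishes only if `d = 0`. Local minimizers are global because the feasible set is convex and the
cost is affine, and controls are determined a.e. by the trajectory as `-ẋ/a`.
-/

theorem integral_exp_neg_mul {lam : ℝ} (hlam : lam ≠ 0) (p q : ℝ) :
    ∫ t in p..q, Real.exp (-(lam * t)) = (Real.exp (-(lam * p)) - Real.exp (-(lam * q))) / lam := by
  have h := intervalIntegral.integral_comp_mul_left Real.exp (neg_ne_zero.mpr hlam)
    (a := p) (b := q)
  simp only [neg_mul, integral_exp, smul_eq_mul] at h
  rw [h]
  field_simp
  ring

theorem ContinuousOn.eqOn_zero_of_integral_eq_zero {f : ℝ → ℝ} {p q : ℝ} (hpq : p < q)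
    (hf : ContinuousOn f (Icc p q)) (hnn : ∀ t ∈ Icc p q, 0 ≤ f t)
    (hzero : ∫ t in p..q, f t = 0) : ∀ t ∈ Icc p q, f t = 0 := by
  by_contra! ⟨c, hc, hfc⟩
  have := intervalIntegral.integral_pos hpq hf (fun t ht => hnn t (Ioc_subset_Icc_self ht))
    ⟨c, hc, (hnn c hc).lt_of_ne' hfc⟩
  linarith

section DiscountedIntegral

variable {c lam t0 s T : ℝ} {d : ℝ → ℝ}

theorem integral_exp_neg_mul_mul_split (hlam : lam ≠ 0) (hs : s ∈ Icc t0 T)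
    (hd : ContinuousOn d (Icc t0 T)) :
    c * (∫ t in t0..T, Real.exp (-(lam * t)) * d t) - Real.exp (-(lam * T)) * d T
      = c * (∫ t in t0..s, Real.exp (-(lam * t)) * d t)
        + c * (∫ t in s..T, Real.exp (-(lam * t)) * (d t - d T))
        + -d T * (Real.exp (-(lam * T))
          - c * (Real.exp (-(lam * s)) - Real.exp (-(lam * T))) / lam) := by
  have he : Continuous fun t => Real.exp (-(lam * t)) := by fun_prop
  have hed : ContinuousOn (fun t => Real.exp (-(lam * t)) * d t) (Icc t0 T) :=
    he.continuousOn.mul hd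
  rw [← intervalIntegral.integral_add_adjacent_intervals
      ((hed.mono (Icc_subset_Icc_right hs.2)).intervalIntegrable_of_Icc hs.1)
      ((hed.mono (Icc_subset_Icc_left hs.1)).intervalIntegrable_of_Icc hs.2)]
  simp only [mul_sub]
  rw [intervalIntegral.integral_sub
      ((hed.mono (Icc_subset_Icc_left hs.1)).intervalIntegrable_of_Icc hs.2)
      (he.intervalIntegrable _ _ |>.mul_const _),
    intervalIntegral.integral_mul_const, integral_exp_neg_mul hlam]
  field_simp
  ring

theorem mul_exp_neg_mul_sub_le (hlam : 0 < lam)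
    (hgrowth : c * (Real.exp (lam * (T - s)) - 1) ≤ lam) :
    c * (Real.exp (-(lam * s)) - Real.exp (-(lam * T))) / lam ≤ Real.exp (-(lam * T)) := by
  have hsplit : Real.exp (-(lam * s)) = Real.exp (-(lam * T)) * Real.exp (lam * (T - s)) := by
    rw [← Real.exp_add]
    ring_nf
  rw [div_le_iff₀ hlam, hsplit]
  nlinarith [Real.exp_pos (-(lam * T))]

theorem integral_exp_neg_mul_mul_split_nonneg (hc : 0 ≤ c) (hlam : 0 < lam)
    (hs : s ∈ Icc t0 T) (hgrowth : c * (Real.exp (lam * (T - s)) - 1) ≤ lam)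
    (hd_left : ∀ t ∈ Icc t0 s, 0 ≤ d t) (hd_right : ∀ t ∈ Icc s T, d T ≤ d t) (hdT : d T ≤ 0) :
    0 ≤ c * (∫ t in t0..s, Real.exp (-(lam * t)) * d t) ∧
      0 ≤ c * (∫ t in s..T, Real.exp (-(lam * t)) * (d t - d T)) ∧
      0 ≤ -d T * (Real.exp (-(lam * T))
        - c * (Real.exp (-(lam * s)) - Real.exp (-(lam * T))) / lam) :=
  ⟨mul_nonneg hc (intervalIntegral.integral_nonneg hs.1 fun t ht =>
      mul_nonneg (Real.exp_pos _).le (hd_left t ht)),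
    mul_nonneg hc (intervalIntegral.integral_nonneg hs.2 fun t ht =>
      mul_nonneg (Real.exp_pos _).le (sub_nonneg.mpr (hd_right t ht))),
    mul_nonneg (neg_nonneg.mpr hdT) (sub_nonneg.mpr (mul_exp_neg_mul_sub_le hlam hgrowth))⟩

theorem exp_neg_mul_mul_le_integral (hc : 0 ≤ c) (hlam : 0 < lam) (hs : s ∈ Icc t0 T)
    (hgrowth : c * (Real.exp (lam * (T - s)) - 1) ≤ lam) (hd : ContinuousOn d (Icc t0 T))
    (hd_left : ∀ t ∈ Icc t0 s, 0 ≤ d t) (hd_right : ∀ t ∈ Icc s T, d T ≤ d t) (hdT : d T ≤ 0) :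
    Real.exp (-(lam * T)) * d T ≤ c * ∫ t in t0..T, Real.exp (-(lam * t)) * d t := by
  obtain ⟨hP, hQ, hR⟩ :=
    integral_exp_neg_mul_mul_split_nonneg hc hlam hs hgrowth hd_left hd_right hdT
  linarith [integral_exp_neg_mul_mul_split (c := c) hlam.ne' hs hd]

theorem eqOn_zero_of_exp_neg_mul_mul_eq_integral (hc : 0 < c) (hlam : 0 < lam)
    (hs : s ∈ Icc t0 T) (hgrowth : c * (Real.exp (lam * (T - s)) - 1) ≤ lam)
    (hd : ContinuousOn d (Icc t0 T)) (hd_left : ∀ t ∈ Icc t0 s, 0 ≤ d t)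
    (hd_right : ∀ t ∈ Icc s T, d T ≤ d t) (hdT : d T ≤ 0)
    (heq : Real.exp (-(lam * T)) * d T = c * ∫ t in t0..T, Real.exp (-(lam * t)) * d t) :
    ∀ t ∈ Icc t0 T, d t = 0 := by
  obtain ⟨hP, hQ, hR⟩ :=
    integral_exp_neg_mul_mul_split_nonneg hc.le hlam hs hgrowth hd_left hd_right hdT
  have hsplit := integral_exp_neg_mul_mul_split (c := c) hlam.ne' hs hd
  have hP0 : ∫ t in t0..s, Real.exp (-(lam * t)) * d t = 0 :=
    (mul_eq_zero.mp (by linarith)).resolve_left hc.ne'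
  have hQ0 : ∫ t in s..T, Real.exp (-(lam * t)) * (d t - d T) = 0 :=
    (mul_eq_zero.mp (by linarith)).resolve_left hc.ne'
  have he : Continuous fun t => Real.exp (-(lam * t)) := by fun_prop
  -- `d` is constant on `[s, T]`; the constant is `d s ≥ 0` and `d T ≤ 0`, hence zero.
  have hd_const : ∀ t ∈ Icc s T, d t = d T := by
    rcases hs.2.eq_or_lt with hsT | hsT
    · intro t ht
      rw [le_antisymm ht.2 (hsT ▸ ht.1)]
    · intro t ht
      have := ContinuousOn.eqOn_zero_of_integral_eq_zero hsT
        (he.continuousOn.mul ((hd.mono (Icc_subset_Icc_left hs.1)).sub continuousOn_const))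
        (fun t ht => mul_nonneg (Real.exp_pos _).le (sub_nonneg.mpr (hd_right t ht))) hQ0 t ht
      exact sub_eq_zero.mp ((mul_eq_zero.mp this).resolve_left (Real.exp_pos _).ne')
  have hdT0 : d T = 0 := le_antisymm hdT
    (hd_const s ⟨le_rfl, hs.2⟩ ▸ hd_left s ⟨hs.1, le_rfl⟩)
  intro t ht
  rcases le_total s t with hst | hts
  · exact (hd_const t ⟨hst, ht.2⟩).trans hdT0
  rcases hs.1.eq_or_lt with ht0s | ht0s
  · rw [show t = s by linarith [ht.1], hd_const s ⟨le_rfl, hs.2⟩, hdT0]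
  have := ContinuousOn.eqOn_zero_of_integral_eq_zero ht0s
    (he.continuousOn.mul (hd.mono (Icc_subset_Icc_right hs.2)))
    (fun t ht => mul_nonneg (Real.exp_pos _).le (hd_left t ht)) hP0 t ⟨ht.1, hts⟩
  exact (mul_eq_zero.mp this).resolve_left (Real.exp_pos _).ne'

end DiscountedIntegral

namespace FP3Feasible

variable {a t0 T x0 : ℝ} {x u : ℝ → ℝ}

theorem integrableOn (h : FP3Feasible a t0 T x0 x u) : IntegrableOn u (Icc t0 T) := by
  refine Integrable.mono' (integrable_const 1) h.1 ?_
  filter_upwards [h.2.1] with t ht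
  exact abs_le.mpr ht

theorem intervalIntegrable (h : FP3Feasible a t0 T x0 x u) {p q : ℝ}
    (hp : p ∈ Icc t0 T) (hq : q ∈ Icc t0 T) :
    IntervalIntegrable (fun s => -(a * u s)) volume p q :=
  ((h.integrableOn.mono_set (uIcc_subset_Icc hp hq)).intervalIntegrable.const_mul a).neg

theorem lipschitzOnWith (h : FP3Feasible a t0 T x0 x u) (ha : 0 ≤ a) :
    LipschitzOnWith a.toNNReal x (Icc t0 T) := by
  refine LipschitzOnWith.of_dist_le_mul fun t ht s hs => ?_
  have h0 : t0 ∈ Icc t0 T := ⟨le_rfl, ht.1.trans ht.2⟩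
  rw [Real.dist_eq, Real.dist_eq, h.2.2.1 t ht, h.2.2.1 s hs, add_sub_add_left_eq_sub,
    intervalIntegral.integral_interval_sub_left (h.intervalIntegrable h0 ht)
      (h.intervalIntegrable h0 hs), Real.coe_toNNReal a ha, ← Real.norm_eq_abs]
  refine intervalIntegral.norm_integral_le_of_norm_le_const_ae ?_
  filter_upwards [ae_restrict_iff' measurableSet_Icc |>.mp h.2.1] with r hr hrI
  have hu := abs_le.mpr (hr (uIoc_subset_uIcc.trans (uIcc_subset_Icc hs ht) hrI))
  rw [norm_neg, norm_mul, Real.norm_of_nonneg ha, Real.norm_eq_abs]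
  exact mul_le_of_le_one_right ha hu

theorem abs_sub_le (h : FP3Feasible a t0 T x0 x u) (ha : 0 ≤ a) {s t : ℝ}
    (hs : s ∈ Icc t0 T) (ht : t ∈ Icc t0 T) : |x t - x s| ≤ a * |t - s| := by
  simpa [Real.dist_eq, Real.coe_toNNReal a ha] using (h.lipschitzOnWith ha).dist_le_mul t ht s hs

theorem ae_hasDerivAt (h : FP3Feasible a t0 T x0 x u) (htT : t0 ≤ T) :
    ∀ᵐ t ∂(volume.restrict (Icc t0 T)), HasDerivAt x (-(a * u t)) t := by
  rw [← Measure.restrict_congr_set Ioo_ae_eq_Icc, ae_restrict_iff' measurableSet_Ioo]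
  have hI := h.intervalIntegrable (left_mem_Icc.mpr htT) (right_mem_Icc.mpr htT)
  filter_upwards [hI.ae_hasDerivAt_integral] with t ht htI
  have hmem : t ∈ uIcc t0 T := by rw [uIcc_of_le htT]; exact Ioo_subset_Icc_self htI
  refine ((ht hmem t0 left_mem_uIcc).const_add x0).congr_of_eventuallyEq ?_
  filter_upwards [Icc_mem_nhds htI.1 htI.2] with s hs using h.2.2.1 s hs

theorem absolutelyContinuousOnInterval (h : FP3Feasible a t0 T x0 x u) (ha : 0 ≤ a)
    (htT : t0 ≤ T) : AbsolutelyContinuousOnInterval x t0 T :=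
  (uIcc_of_le htT ▸ h.lipschitzOnWith ha).absolutelyContinuousOnInterval

theorem intervalIntegrable_exp_mul (h : FP3Feasible a t0 T x0 x u) (ha : 0 ≤ a) (htT : t0 ≤ T)
    (lam : ℝ) : IntervalIntegrable (fun t => Real.exp (-(lam * t)) * x t) volume t0 T :=
  ((by fun_prop : Continuous fun t => Real.exp (-(lam * t))).continuousOn.mul
    (h.absolutelyContinuousOnInterval ha htT).continuousOn).intervalIntegrable

theorem cost_eq (h : FP3Feasible a t0 T x0 x u) (ha : 0 ≤ a) (htT : t0 ≤ T) (lam : ℝ) :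
    a * FP3Cost lam t0 T x u = Real.exp (-(lam * T)) * x T - Real.exp (-(lam * t0)) * x0
      - (a - lam) * ∫ t in t0..T, Real.exp (-(lam * t)) * x t := by
  set e : ℝ → ℝ := fun t => Real.exp (-(lam * t))
  have he_deriv : ∀ t, HasDerivAt e (-lam * e t) t := fun t => by
    simpa [e, mul_comm] using ((hasDerivAt_id t).const_mul lam).neg.exp
  have he : AbsolutelyContinuousOnInterval e t0 T :=
    (by fun_prop : ContDiff ℝ 1 e).contDiffOn.absolutelyContinuousOnInterval
  have hx := h.absolutelyContinuousOnInterval ha htT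
  have heu : IntervalIntegrable (fun t => e t * u t) volume t0 T :=
    ((h.integrableOn.mono_set (uIcc_of_le htT).subset).intervalIntegrable).continuousOn_mul
      he.continuousOn
  have h_ibp := he.integral_mul_deriv_eq_deriv_mul hx
  have h_deriv_x : ∫ t in t0..T, e t * deriv x t = -a * ∫ t in t0..T, e t * u t := by
    rw [← intervalIntegral.integral_const_mul]
    refine intervalIntegral.integral_congr_ae_restrict ?_
    filter_upwards [ae_restrict_of_ae_restrict_of_subset (uIoc_subset_uIcc.trans
      (uIcc_of_le htT).subset) (h.ae_hasDerivAt htT)] with t ht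
    rw [ht.deriv]
    ring
  have h_deriv_e : ∫ t in t0..T, deriv e t * x t = -lam * ∫ t in t0..T, e t * x t := by
    simp only [fun t => (he_deriv t).deriv, ← intervalIntegral.integral_const_mul, mul_assoc]
  have hx0 : x t0 = x0 := by simpa using h.2.2.1 t0 (left_mem_Icc.mpr htT)
  have h_cost : FP3Cost lam t0 T x u = -(∫ t in t0..T, e t * x t) - ∫ t in t0..T, e t * u t := by
    rw [FP3Cost, sub_eq_add_neg, ← neg_add,
      ← intervalIntegral.integral_add (h.intervalIntegrable_exp_mul ha htT lam) heu,
      ← intervalIntegral.integral_neg]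
    simp only [e, mul_add]
  rw [h_deriv_x, h_deriv_e, hx0] at h_ibp
  rw [h_cost]
  linear_combination h_ibp

theorem ae_eq_of_eqOn {y v : ℝ → ℝ} (h : FP3Feasible a t0 T x0 x u)
    (h' : FP3Feasible a t0 T x0 y v) (ha : a ≠ 0) (htT : t0 ≤ T) (hxy : EqOn x y (Icc t0 T)) :
    u =ᵐ[volume.restrict (Icc t0 T)] v := by
  have hx := h.ae_hasDerivAt htT
  have hy := h'.ae_hasDerivAt htT
  rw [← Measure.restrict_congr_set Ioo_ae_eq_Icc] at hx hy ⊢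
  filter_upwards [hx, hy, ae_restrict_mem measurableSet_Ioo] with t hxt hyt ht
  have hyx : y =ᶠ[nhds t] x := by
    filter_upwards [Icc_mem_nhds ht.1 ht.2] with s hs using (hxy hs).symm
  have := (hxt.congr_of_eventuallyEq hyx).unique hyt
  exact mul_left_cancel₀ ha (neg_inj.mp this)

theorem convex_comb {y v : ℝ → ℝ} (h : FP3Feasible a t0 T x0 x u)
    (h' : FP3Feasible a t0 T x0 y v) {θ : ℝ} (hθ0 : 0 ≤ θ) (hθ1 : θ ≤ 1) :
    FP3Feasible a t0 T x0 (fun t => (1 - θ) * x t + θ * y t)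
      (fun t => (1 - θ) * u t + θ * v t) := by
  have hconv : Convex ℝ (Icc (-1 : ℝ) 1) := convex_Icc _ _
  refine ⟨(h.1.const_mul _).add (h'.1.const_mul _), ?_, fun t ht => ?_, fun t ht => ?_⟩
  · filter_upwards [h.2.1, h'.2.1] with s hu hv
    exact hconv hu hv (sub_nonneg.mpr hθ1) hθ0 (by ring)
  · have h0 : t0 ∈ Icc t0 T := ⟨le_rfl, ht.1.trans ht.2⟩
    have hI : ∫ s in t0..t, -(a * ((1 - θ) * u s + θ * v s))
        = (1 - θ) * (∫ s in t0..t, -(a * u s)) + θ * ∫ s in t0..t, -(a * v s) := by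
      rw [← intervalIntegral.integral_const_mul, ← intervalIntegral.integral_const_mul,
        ← intervalIntegral.integral_add ((h.intervalIntegrable h0 ht).const_mul _)
          ((h'.intervalIntegrable h0 ht).const_mul _)]
      congr 1 with s
      ring
    simp only [h.2.2.1 t ht, h'.2.2.1 t ht, hI]
    ring
  · exact hconv (h.2.2.2 t ht) (h'.2.2.2 t ht) (sub_nonneg.mpr hθ1) hθ0 (by ring)

theorem cost_convex_comb {y v : ℝ → ℝ} (h : FP3Feasible a t0 T x0 x u)
    (h' : FP3Feasible a t0 T x0 y v) (ha : 0 < a) (htT : t0 ≤ T) {θ : ℝ} (hθ0 : 0 ≤ θ)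
    (hθ1 : θ ≤ 1) (lam : ℝ) :
    FP3Cost lam t0 T (fun t => (1 - θ) * x t + θ * y t) (fun t => (1 - θ) * u t + θ * v t)
      = (1 - θ) * FP3Cost lam t0 T x u + θ * FP3Cost lam t0 T y v := by
  have hI : ∫ t in t0..T, Real.exp (-(lam * t)) * ((1 - θ) * x t + θ * y t)
      = (1 - θ) * (∫ t in t0..T, Real.exp (-(lam * t)) * x t)
        + θ * ∫ t in t0..T, Real.exp (-(lam * t)) * y t := by
    rw [← intervalIntegral.integral_const_mul, ← intervalIntegral.integral_const_mul,
      ← intervalIntegral.integral_add ((h.intervalIntegrable_exp_mul ha.le htT lam).const_mul _)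
        ((h'.intervalIntegrable_exp_mul ha.le htT lam).const_mul _)]
    congr 1 with t
    ring
  apply mul_left_cancel₀ ha.ne'
  rw [(h.convex_comb h' hθ0 hθ1).cost_eq ha.le htT, hI]
  linear_combination -(1 - θ) * h.cost_eq ha.le htT lam - θ * h'.cost_eq ha.le htT lam

theorem integral_abs_sub_le {y v : ℝ → ℝ} (h : FP3Feasible a t0 T x0 x u)
    (h' : FP3Feasible a t0 T x0 y v) (htT : t0 ≤ T) :
    ∫ t in t0..T, |(-(a * v t)) - (-(a * u t))| ≤ 2 * |a| * (T - t0) := by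
  have hbound := intervalIntegral.norm_integral_le_of_norm_le_const_ae
    (f := fun t => |(-(a * v t)) - (-(a * u t))|) (C := 2 * |a|) (a := t0) (b := T) ?_
  · rw [abs_of_nonneg (sub_nonneg.mpr htT)] at hbound
    exact (le_abs_self _).trans hbound
  rw [uIoc_of_le htT]
  filter_upwards [ae_restrict_iff' measurableSet_Icc |>.mp h.2.1,
    ae_restrict_iff' measurableSet_Icc |>.mp h'.2.1] with t hu hv ht
  have hu := abs_le.mpr (hu (Ioc_subset_Icc_self ht))
  have hv := abs_le.mpr (hv (Ioc_subset_Icc_self ht))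
  rw [Real.norm_eq_abs, abs_abs, neg_sub_neg, ← mul_sub, abs_mul]
  have := abs_sub (u t) (v t)
  nlinarith [abs_nonneg a]

end FP3Feasible

theorem FP3LocalMin.globalMin {a lam t0 T x0 : ℝ} {x u : ℝ → ℝ}
    (h : FP3LocalMin a lam t0 T x0 x u) (ha : 0 < a) (htT : t0 ≤ T) :
    FP3GlobalMin a lam t0 T x0 x u := by
  obtain ⟨hx, δ, hδ, hmin⟩ := h
  refine ⟨hx, fun y v hyv => ?_⟩
  obtain ⟨θ, hθ0, hθ1, hθδ⟩ : ∃ θ : ℝ, 0 < θ ∧ θ ≤ 1 ∧ θ * (2 * |a| * (T - t0)) ≤ δ := by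
    set C := 2 * |a| * (T - t0)
    have hC : 0 ≤ C := mul_nonneg (by positivity) (sub_nonneg.mpr htT)
    refine ⟨min 1 (δ / (C + 1)), by positivity, min_le_left _ _, ?_⟩
    calc min 1 (δ / (C + 1)) * C ≤ δ / (C + 1) * C :=
          mul_le_mul_of_nonneg_right (min_le_right _ _) hC
      _ ≤ δ := by
          rw [div_mul_eq_mul_div, div_le_iff₀ (by positivity)]
          nlinarith
  have hclose : ∫ t in t0..T, |(-(a * ((1 - θ) * u t + θ * v t))) - (-(a * u t))| ≤ δ := by
    have : ∀ t, |(-(a * ((1 - θ) * u t + θ * v t))) - (-(a * u t))|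
        = θ * |(-(a * v t)) - (-(a * u t))| := fun t => by
      rw [show (-(a * ((1 - θ) * u t + θ * v t))) - (-(a * u t))
        = θ * ((-(a * v t)) - (-(a * u t))) by ring, abs_mul, abs_of_pos hθ0]
    simp only [this, intervalIntegral.integral_const_mul]
    exact (mul_le_mul_of_nonneg_left (hx.integral_abs_sub_le hyv htT) hθ0.le).trans hθδ
  have hle := hmin _ _ (hx.convex_comb hyv hθ0.le hθ1) hclose
  rw [hx.cost_convex_comb hyv ha htT hθ0.le hθ1] at hle
  nlinarith

namespace FP3

def endValue (a t0 T x0 : ℝ) : ℝ := max (x0 - a * (T - t0)) (-1)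

def optTraj (a t0 T x0 : ℝ) (t : ℝ) : ℝ :=
  min (min (x0 + a * (t - t0)) 1) (endValue a t0 T x0 + a * (T - t))

def optControl (a t0 T x0 : ℝ) (t : ℝ) : ℝ := -deriv (optTraj a t0 T x0) t / a

variable {a t0 T x0 : ℝ}

theorem lipschitzWith_optTraj (ha : 0 ≤ a) :
    LipschitzWith a.toNNReal (optTraj a t0 T x0) := by
  refine LipschitzWith.of_dist_le_mul fun t s => ?_
  rw [Real.dist_eq, Real.dist_eq, Real.coe_toNNReal a ha]
  refine (abs_min_sub_min_le_max _ _ _ _).trans (max_le ?_ ?_)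
  · refine (abs_min_sub_min_le_max _ _ _ _).trans (max_le ?_ ?_)
    · rw [show x0 + a * (t - t0) - (x0 + a * (s - t0)) = a * (t - s) by ring, abs_mul,
        abs_of_nonneg ha]
    · simp only [sub_self, abs_zero]
      positivity
  · rw [show endValue a t0 T x0 + a * (T - t) - (endValue a t0 T x0 + a * (T - s))
      = a * (s - t) by ring, abs_mul, abs_of_nonneg ha, abs_sub_comm]

theorem optTraj_start (htT : t0 ≤ T) (ha : 0 ≤ a) (hx0 : x0 ≤ 1) :
    optTraj a t0 T x0 t0 = x0 := by
  have hE : x0 - a * (T - t0) ≤ endValue a t0 T x0 := le_max_left _ _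
  have : 0 ≤ a * (T - t0) := mul_nonneg ha (sub_nonneg.mpr htT)
  rw [optTraj, sub_self, mul_zero, add_zero, min_eq_left hx0, min_eq_left (by linarith)]

theorem optTraj_feasible (ha : 0 < a) (htT : t0 ≤ T) (hx0 : x0 ∈ Icc (-1 : ℝ) 1) :
    FP3Feasible a t0 T x0 (optTraj a t0 T x0) (optControl a t0 T x0) := by
  have hlip := lipschitzWith_optTraj (t0 := t0) (T := T) (x0 := x0) ha.le
  refine ⟨((measurable_deriv _).neg.div_const a).aestronglyMeasurable, ae_of_all _ fun t => ?_,
    fun t ht => ?_, fun t ht => ⟨?_, ?_⟩⟩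
  · have hd : |deriv (optTraj a t0 T x0) t| ≤ a := by
      simpa [Real.coe_toNNReal a ha.le] using norm_deriv_le_of_lipschitz (x₀ := t) hlip
    rw [optControl, mem_Icc, ← abs_le, abs_div, abs_neg, abs_of_pos ha, div_le_one ha]
    exact hd
  · have hFTC := (hlip.lipschitzOnWith (s := uIcc t0 t)).absolutelyContinuousOnInterval
      |>.integral_deriv_eq_sub
    simp only [optControl, mul_div_cancel₀ _ ha.ne', neg_neg, hFTC,
      optTraj_start htT ha.le hx0.2]
    ring
  · have h1 : x0 - a * (T - t0) ≤ endValue a t0 T x0 := le_max_left _ _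
    have h2 : -1 ≤ endValue a t0 T x0 := le_max_right _ _
    have h3 : 0 ≤ a * (t - t0) := mul_nonneg ha.le (sub_nonneg.mpr ht.1)
    have h4 : 0 ≤ a * (T - t) := mul_nonneg ha.le (sub_nonneg.mpr ht.2)
    exact le_min (le_min (by linarith [hx0.1]) (by norm_num)) (by linarith)
  · exact (min_le_left _ _).trans (min_le_right _ _)

theorem exists_switchTime (ha : 0 < a) (htT : t0 ≤ T) (hx0 : x0 ∈ Icc (-1 : ℝ) 1) :
    ∃ s ∈ Icc t0 T, a * (T - s) ≤ 2 ∧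
      (∀ t ∈ Icc t0 s, optTraj a t0 T x0 t = min (x0 + a * (t - t0)) 1) ∧
      (∀ t ∈ Icc s T, optTraj a t0 T x0 t = endValue a t0 T x0 + a * (T - t)) := by
  set E := endValue a t0 T x0
  have hE1 : x0 - a * (T - t0) ≤ E := le_max_left _ _
  have hE2 : -1 ≤ E := le_max_right _ _
  have hlen : 0 ≤ a * (T - t0) := mul_nonneg ha.le (sub_nonneg.mpr htT)
  have hE3 : E ≤ x0 + a * (T - t0) := max_le (by linarith) (by linarith [hx0.1])
  have hE4 : E ≤ 1 := max_le (by linarith [hx0.2]) (by norm_num)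
  -- The final descent drops by `m = a (T - s)`: it starts at height `1` or where it meets the
  -- initial ascent, whichever is lower.
  set m := min (1 - E) ((x0 + a * (T - t0) - E) / 2)
  have hm : a * (T - (T - m / a)) = m := by field_simp; ring
  have hm1 : m ≤ 1 - E := min_le_left _ _
  have hm2 : m ≤ (x0 + a * (T - t0) - E) / 2 := min_le_right _ _
  have hm0 : 0 ≤ m := le_min (by linarith) (by linarith)
  refine ⟨T - m / a, ⟨?_, ?_⟩, ?_, fun t ht => min_eq_left ?_, fun t ht => min_eq_right ?_⟩
  · rw [le_sub_comm, div_le_iff₀ ha]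
    linarith
  · exact sub_le_self _ (div_nonneg hm0 ha.le)
  · rw [hm]
    linarith
  · have : m ≤ a * (T - t) := hm ▸ mul_le_mul_of_nonneg_left (by linarith [ht.2]) ha.le
    rcases min_le_iff.mp this with h | h
    · exact (min_le_right _ _).trans (by linarith)
    · exact (min_le_left _ _).trans (by linarith)
  · have : a * (T - t) ≤ m := hm ▸ mul_le_mul_of_nonneg_left (by linarith [ht.1]) ha.le
    exact le_min (by linarith) (by linarith)

variable {lam : ℝ} {y v : ℝ → ℝ}

theorem sub_mul_exp_sub_one_le (hlam : 0 < lam) (hal : lam < a) {τ : ℝ}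
    (hτ : τ ≤ FP3rho a lam) : (a - lam) * (Real.exp (lam * τ) - 1) ≤ lam := by
  have hpos : 0 < a - lam := sub_pos.mpr hal
  have hlog : lam * τ ≤ Real.log (a / (a - lam)) := by
    have := mul_le_mul_of_nonneg_left hτ hlam.le
    rwa [FP3rho, ← mul_assoc, mul_one_div_cancel hlam.ne', one_mul] at this
  have hexp : Real.exp (lam * τ) ≤ a / (a - lam) :=
    (Real.exp_le_exp.mpr hlog).trans_eq (Real.exp_log (div_pos (hlam.trans hal) hpos))
  rw [le_div_iff₀ hpos] at hexp
  nlinarith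

theorem cost_sub_cost_optTraj (hyv : FP3Feasible a t0 T x0 y v) (ha : 0 < a) (htT : t0 ≤ T)
    (hx0 : x0 ∈ Icc (-1 : ℝ) 1) :
    a * (FP3Cost lam t0 T y v - FP3Cost lam t0 T (optTraj a t0 T x0) (optControl a t0 T x0))
      = (a - lam) * (∫ t in t0..T, Real.exp (-(lam * t)) * (optTraj a t0 T x0 t - y t))
        - Real.exp (-(lam * T)) * (optTraj a t0 T x0 T - y T) := by
  have hopt := optTraj_feasible ha htT hx0
  simp only [mul_sub (Real.exp _), intervalIntegral.integral_sub
    (hopt.intervalIntegrable_exp_mul ha.le htT lam) (hyv.intervalIntegrable_exp_mul ha.le htT lam)]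
  rw [mul_sub, hyv.cost_eq ha.le htT, hopt.cost_eq ha.le htT]
  ring

theorem exists_optTraj_comparison (hyv : FP3Feasible a t0 T x0 y v) (ha : 0 < a)
    (htT : t0 ≤ T) (hx0 : x0 ∈ Icc (-1 : ℝ) 1) :
    ∃ s ∈ Icc t0 T, a * (T - s) ≤ 2 ∧
      (∀ t ∈ Icc t0 s, y t ≤ optTraj a t0 T x0 t) ∧
      (∀ t ∈ Icc s T, optTraj a t0 T x0 T - y T ≤ optTraj a t0 T x0 t - y t) ∧
      optTraj a t0 T x0 T ≤ y T := by
  obtain ⟨s, hs, hsT, h_rise, h_fall⟩ := exists_switchTime ha htT hx0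
  have hT : T ∈ Icc t0 T := right_mem_Icc.mpr htT
  have hy0 : y t0 = x0 := by simpa using hyv.2.2.1 t0 (left_mem_Icc.mpr htT)
  refine ⟨s, hs, hsT, fun t ht => ?_, fun t ht => ?_, ?_⟩
  · have htI : t ∈ Icc t0 T := ⟨ht.1, ht.2.trans hs.2⟩
    have := (abs_le.mp (hyv.abs_sub_le ha.le (left_mem_Icc.mpr htT) htI)).2
    rw [abs_of_nonneg (sub_nonneg.mpr ht.1), hy0] at this
    rw [h_rise t ht]
    exact le_min (by linarith) (hyv.2.2.2 t htI).2
  · have := (abs_le.mp (hyv.abs_sub_le ha.le ⟨hs.1.trans ht.1, ht.2⟩ hT)).1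
    rw [abs_of_nonneg (sub_nonneg.mpr ht.2)] at this
    rw [h_fall t ht, h_fall T ⟨hs.2, le_rfl⟩]
    linarith
  · have := (abs_le.mp (hyv.abs_sub_le ha.le (left_mem_Icc.mpr htT) hT)).1
    rw [abs_of_nonneg (sub_nonneg.mpr htT), hy0] at this
    rw [h_fall T ⟨hs.2, le_rfl⟩, sub_self, mul_zero, add_zero]
    exact max_le (by linarith) (hyv.2.2.2 T hT).1

theorem cost_optTraj_le (hyv : FP3Feasible a t0 T x0 y v) (hlam : 0 < lam) (hal : lam < a)
    (htT : t0 ≤ T) (hx0 : x0 ∈ Icc (-1 : ℝ) 1) (hrho : 2 / a ≤ FP3rho a lam) :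
    FP3Cost lam t0 T (optTraj a t0 T x0) (optControl a t0 T x0) ≤ FP3Cost lam t0 T y v ∧
      (FP3Cost lam t0 T y v = FP3Cost lam t0 T (optTraj a t0 T x0) (optControl a t0 T x0) →
        EqOn y (optTraj a t0 T x0) (Icc t0 T)) := by
  have ha : 0 < a := hlam.trans hal
  obtain ⟨s, hs, hsT, h_left, h_right, h_end⟩ := exists_optTraj_comparison hyv ha htT hx0
  have hgrowth := sub_mul_exp_sub_one_le hlam hal (((le_div_iff₀' ha).mpr hsT).trans hrho)
  set d := fun t => optTraj a t0 T x0 t - y t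
  have hd : ContinuousOn d (Icc t0 T) :=
    (lipschitzWith_optTraj ha.le).continuous.continuousOn.sub
      (hyv.lipschitzOnWith ha.le).continuousOn
  have hd_left : ∀ t ∈ Icc t0 s, 0 ≤ d t := fun t ht => sub_nonneg.mpr (h_left t ht)
  have hdT : d T ≤ 0 := sub_nonpos.mpr h_end
  have hgap := cost_sub_cost_optTraj (lam := lam) hyv ha htT hx0
  refine ⟨?_, fun heq t ht => ?_⟩
  · have := exp_neg_mul_mul_le_integral (sub_pos.mpr hal).le hlam hs hgrowth hd hd_left
      h_right hdT
    nlinarith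
  · rw [heq, sub_self, mul_zero] at hgap
    have := eqOn_zero_of_exp_neg_mul_mul_eq_integral (sub_pos.mpr hal) hlam hs hgrowth hd
      hd_left h_right hdT (by linarith) t ht
    exact (sub_eq_zero.mp this).symm

end FP3

theorem FP3LocalMin.eqOn_optTraj {a lam t0 T x0 : ℝ} {x u : ℝ → ℝ}
    (h : FP3LocalMin a lam t0 T x0 x u) (hlam : 0 < lam) (hal : lam < a) (htT : t0 ≤ T)
    (hx0 : x0 ∈ Icc (-1 : ℝ) 1) (hrho : 2 / a ≤ FP3rho a lam) :
    EqOn x (FP3.optTraj a t0 T x0) (Icc t0 T) := by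
  have ha : 0 < a := hlam.trans hal
  have hcomp := FP3.cost_optTraj_le h.1 hlam hal htT hx0 hrho
  exact hcomp.2 (le_antisymm ((h.globalMin ha htT).2 _ _ (FP3.optTraj_feasible ha htT hx0))
    hcomp.1)

namespace FP3

variable {a t0 T x0 : ℝ} {x : ℝ → ℝ}

theorem trajectory_of_short_horizon (hx : EqOn x (optTraj a t0 T x0) (Icc t0 T)) (ha : 0 < a)
    (hx0 : x0 ≤ 1) (hA : T - t0 ≤ (1 + x0) / a) :
    ∀ t ∈ Icc t0 T, x t = x0 - a * (t - t0) := by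
  rw [le_div_iff₀ ha] at hA
  have hE : endValue a t0 T x0 = x0 - a * (T - t0) := max_eq_left (by linarith)
  intro t ht
  have : 0 ≤ a * (t - t0) := mul_nonneg ha.le (sub_nonneg.mpr ht.1)
  rw [hx ht, optTraj, hE, min_eq_right (le_min (by linarith) (by linarith))]
  ring

theorem trajectory_of_medium_horizon (hx : EqOn x (optTraj a t0 T x0) (Icc t0 T)) (ha : 0 < a)
    (hx0 : -1 ≤ x0) (hB1 : (1 + x0) / a < T - t0) (hB2 : T - t0 < (3 - x0) / a) :
    (∀ t ∈ Icc t0 ((T + t0 - (1 + x0) / a) / 2), x t = x0 + a * (t - t0)) ∧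
    (∀ t ∈ Ioc ((T + t0 - (1 + x0) / a) / 2) T, x t = -1 - a * (t - T)) := by
  have hτ0 : 0 ≤ (1 + x0) / a := div_nonneg (by linarith) ha.le
  have hτ : a * ((1 + x0) / a) = 1 + x0 := mul_div_cancel₀ _ ha.ne'
  rw [lt_div_iff₀ ha] at hB2
  have hB1' : 1 + x0 < a * (T - t0) := hτ ▸ mul_lt_mul_of_pos_left hB1 ha
  have hE : endValue a t0 T x0 = -1 := max_eq_right (by linarith)
  constructor
  · intro t ht
    have := mul_le_mul_of_nonneg_left ht.2 ha.le
    have h_ceil : x0 + a * (t - t0) ≤ 1 := by linarith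
    have h_fall : x0 + a * (t - t0) ≤ -1 + a * (T - t) := by linarith
    rw [hx ⟨ht.1, by linarith [ht.2]⟩, optTraj, hE, min_eq_left h_ceil, min_eq_left h_fall]
  · intro t ht
    have := mul_lt_mul_of_pos_left ht.1 ha
    rw [hx ⟨by linarith [ht.1], ht.2⟩, optTraj, hE,
      min_eq_right (le_min (by linarith) (by linarith))]
    ring

theorem trajectory_of_long_horizon (hx : EqOn x (optTraj a t0 T x0) (Icc t0 T)) (ha : 0 < a)
    (hx0 : x0 ≤ 1) (hC : (3 - x0) / a ≤ T - t0) :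
    (∀ t ∈ Icc t0 (t0 + (1 - x0) / a), x t = x0 + a * (t - t0)) ∧
    (∀ t ∈ Ioc (t0 + (1 - x0) / a) (T - 2 / a), x t = 1) ∧
    (∀ t ∈ Ioc (T - 2 / a) T, x t = -1 - a * (t - T)) := by
  have h1 : a * ((1 - x0) / a) = 1 - x0 := mul_div_cancel₀ _ ha.ne'
  have h2 : a * (2 / a) = 2 := mul_div_cancel₀ _ ha.ne'
  have h10 : 0 ≤ (1 - x0) / a := div_nonneg (by linarith) ha.le
  have h20 : 0 ≤ 2 / a := by positivity
  have h12 : (3 - x0) / a = (1 - x0) / a + 2 / a := by ring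
  have hC' : 3 - x0 ≤ a * (T - t0) := by rw [mul_comm, ← div_le_iff₀ ha]; exact hC
  have hE : endValue a t0 T x0 = -1 := max_eq_right (by linarith)
  refine ⟨fun t ht => ?_, fun t ht => ?_, fun t ht => ?_⟩
  · have := mul_le_mul_of_nonneg_left ht.2 ha.le
    have h_ceil : x0 + a * (t - t0) ≤ 1 := by linarith
    have h_fall : x0 + a * (t - t0) ≤ -1 + a * (T - t) := by linarith
    rw [hx ⟨ht.1, by linarith [ht.2]⟩, optTraj, hE, min_eq_left h_ceil, min_eq_left h_fall]
  · have := mul_lt_mul_of_pos_left ht.1 ha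
    have := mul_le_mul_of_nonneg_left ht.2 ha.le
    have h_rise : 1 ≤ x0 + a * (t - t0) := by linarith
    have h_fall : 1 ≤ -1 + a * (T - t) := by linarith
    rw [hx ⟨by linarith [ht.1], by linarith [ht.2]⟩, optTraj, hE, min_eq_right h_rise,
      min_eq_left h_fall]
  · have := mul_lt_mul_of_pos_left ht.1 ha
    rw [hx ⟨by linarith [ht.1], ht.2⟩, optTraj, hE,
      min_eq_right (le_min (by linarith) (by linarith))]
    ring

end FP3

open FP3 in
theorem fp3_thm3a_general
    (a lam t0 T x0 : ℝ) (hal : lam < a) (hlam : 0 < lam)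
    (htT : t0 < T) (hx0 : x0 ∈ Icc (-1 : ℝ) 1)
    (hrho : 2 / a ≤ FP3rho a lam) :
    (∃ x u : ℝ → ℝ, FP3LocalMin a lam t0 T x0 x u) ∧
    (∀ x u, FP3LocalMin a lam t0 T x0 x u → FP3GlobalMin a lam t0 T x0 x u) ∧
    (∀ x u y v, FP3LocalMin a lam t0 T x0 x u → FP3LocalMin a lam t0 T x0 y v →
      (∀ t ∈ Icc t0 T, x t = y t) ∧
      (∀ᵐ t ∂(volume.restrict (Icc t0 T)), u t = v t)) ∧
    (∀ x u, FP3LocalMin a lam t0 T x0 x u →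
      (T - t0 ≤ (1 + x0) / a →
        ∀ t ∈ Icc t0 T, x t = x0 - a * (t - t0)) ∧
      ((1 + x0) / a < T - t0 → T - t0 < (3 - x0) / a →
        (∀ t ∈ Icc t0 ((T + t0 - (1 + x0) / a) / 2), x t = x0 + a * (t - t0)) ∧
        (∀ t ∈ Ioc ((T + t0 - (1 + x0) / a) / 2) T, x t = -1 - a * (t - T))) ∧
      ((3 - x0) / a ≤ T - t0 →
        (∀ t ∈ Icc t0 (t0 + (1 - x0) / a), x t = x0 + a * (t - t0)) ∧
        (∀ t ∈ Ioc (t0 + (1 - x0) / a) (T - 2 / a), x t = 1) ∧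
        (∀ t ∈ Ioc (T - 2 / a) T, x t = -1 - a * (t - T)))) := by
  have ha : 0 < a := hlam.trans hal
  have hopt := optTraj_feasible ha htT.le hx0
  have htraj : ∀ x u, FP3LocalMin a lam t0 T x0 x u → EqOn x (optTraj a t0 T x0) (Icc t0 T) :=
    fun x u h => h.eqOn_optTraj hlam hal htT.le hx0 hrho
  refine ⟨⟨_, _, hopt, 1, one_pos, fun y v hyv _ =>
      (cost_optTraj_le hyv hlam hal htT.le hx0 hrho).1⟩,
    fun x u h => h.globalMin ha htT.le, fun x u y v hx hy => ?_, fun x u hx => ?_⟩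
  · have hxy : EqOn x y (Icc t0 T) := fun t ht => (htraj x u hx ht).trans (htraj y v hy ht).symm
    exact ⟨hxy, hx.1.ae_eq_of_eqOn hy.1 ha.ne' htT.le hxy⟩
  · have hx := htraj x u hx
    exact ⟨trajectory_of_short_horizon hx ha hx0.2, trajectory_of_medium_horizon hx ha hx0.1,
      trajectory_of_long_horizon hx ha hx0.2⟩

/-- Theorem 3.8: if the characteristic constant satisfies
ρ ≥ 2/a, then (FP3) has a local minimizer, every local minimizer is a global
minimizer, local minimizers are unique (the trajectories coincide on [t0,T] and
the controls coincide a.e.), and the optimal trajectory has the indicated form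
in each of the three parameter regimes. -/
theorem fp3_thm3a
    (a lam t0 T x0 : ℝ) (hal : lam < a) (hlam : 0 < lam)
    (ht0 : 0 ≤ t0) (htT : t0 < T) (hx0 : x0 ∈ Icc (-1 : ℝ) 1)
    (hrho : 2 / a ≤ FP3rho a lam) :
    (∃ x u : ℝ → ℝ, FP3LocalMin a lam t0 T x0 x u) ∧
    (∀ x u, FP3LocalMin a lam t0 T x0 x u → FP3GlobalMin a lam t0 T x0 x u) ∧
    (∀ x u y v, FP3LocalMin a lam t0 T x0 x u → FP3LocalMin a lam t0 T x0 y v →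
      (∀ t ∈ Icc t0 T, x t = y t) ∧
      (∀ᵐ t ∂(volume.restrict (Icc t0 T)), u t = v t)) ∧
    (∀ x u, FP3LocalMin a lam t0 T x0 x u →
      (T - t0 ≤ (1 + x0) / a →
        ∀ t ∈ Icc t0 T, x t = x0 - a * (t - t0)) ∧
      ((1 + x0) / a < T - t0 → T - t0 < (3 - x0) / a →
        (∀ t ∈ Icc t0 ((T + t0 - (1 + x0) / a) / 2), x t = x0 + a * (t - t0)) ∧
        (∀ t ∈ Ioc ((T + t0 - (1 + x0) / a) / 2) T, x t = -1 - a * (t - T))) ∧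
      ((3 - x0) / a ≤ T - t0 →
        (∀ t ∈ Icc t0 (t0 + (1 - x0) / a), x t = x0 + a * (t - t0)) ∧
        (∀ t ∈ Ioc (t0 + (1 - x0) / a) (T - 2 / a), x t = 1) ∧
        (∀ t ∈ Ioc (T - 2 / a) T, x t = -1 - a * (t - T)))) :=
  fp3_thm3a_general a lam t0 T x0 hal hlam htT hx0 hrho
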